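/- Let F, c : ℝ² → ℝ be smooth with c nowhere zero, let Z be a smooth vector field on ℝ², and set F' = c·F, Z' = (1/c)·Z. If p ∈ ℝ² satisfies F(p) = 0, Z(F)(p) = 0 and Z²(F)(p) ≠ 0, then the quantity 𝒜 = Z³(F)(p) / (Z²(F)(p))² is invariant: (Z')³(F')(p) / ((Z')²(F')(p))² = Z³(F)(p) / (Z²(F)(p))². -/

import Mathlib

/-- Lie derivative of `f` along the vector field `Z` on `ℝ²`. -/
noncomputable def lieD (Z : ℝ × ℝ → ℝ × ℝ) (f : ℝ × ℝ → ℝ) : ℝ × ℝ → ℝ :=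
  fun p => fderiv ℝ f p (Z p)

lemma lieD_contDiff {Z : ℝ × ℝ → ℝ × ℝ} {f : ℝ × ℝ → ℝ}
    (hZ : ContDiff ℝ (⊤ : ℕ∞) Z) (hf : ContDiff ℝ (⊤ : ℕ∞) f) : ContDiff ℝ (⊤ : ℕ∞) (lieD Z f) :=
  (hf.fderiv_right (by simp)).clm_apply hZ

lemma lieD_smulV (g : ℝ × ℝ → ℝ) (Z : ℝ × ℝ → ℝ × ℝ) (f : ℝ × ℝ → ℝ) (p : ℝ × ℝ) :
    lieD (fun q => g q • Z q) f p = g p * lieD Z f p := by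
  simp [lieD]

lemma lieD_mul {Z : ℝ × ℝ → ℝ × ℝ} {f h : ℝ × ℝ → ℝ} {p : ℝ × ℝ}
    (hf : DifferentiableAt ℝ f p) (hh : DifferentiableAt ℝ h p) :
    lieD Z (fun q => f q * h q) p = lieD Z f p * h p + f p * lieD Z h p := by
  simp only [lieD]
  show fderiv ℝ (f * h) p (Z p) = _
  rw [(hf.hasFDerivAt.mul hh.hasFDerivAt).fderiv]
  simp only [ContinuousLinearMap.add_apply, ContinuousLinearMap.smul_apply, smul_eq_mul]; ring

lemma lieD_add {Z : ℝ × ℝ → ℝ × ℝ} {f h : ℝ × ℝ → ℝ} {p : ℝ × ℝ}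
    (hf : DifferentiableAt ℝ f p) (hh : DifferentiableAt ℝ h p) :
    lieD Z (fun q => f q + h q) p = lieD Z f p + lieD Z h p := by
  simp only [lieD]
  show fderiv ℝ (f + h) p (Z p) = _
  rw [(hf.hasFDerivAt.add hh.hasFDerivAt).fderiv]
  simp only [ContinuousLinearMap.add_apply]

theorem stmt3 (F c : ℝ × ℝ → ℝ) (Z : ℝ × ℝ → ℝ × ℝ)
    (hF : ContDiff ℝ (⊤ : ℕ∞) F) (hc : ContDiff ℝ (⊤ : ℕ∞) c) (hZ : ContDiff ℝ (⊤ : ℕ∞) Z)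
    (hc0 : ∀ p, c p ≠ 0)
    (F' : ℝ × ℝ → ℝ) (hF' : F' = fun p => c p * F p)
    (Z' : ℝ × ℝ → ℝ × ℝ) (hZ' : Z' = fun p => (c p)⁻¹ • Z p)
    (p : ℝ × ℝ) (hFp : F p = 0) (hZFp : lieD Z F p = 0)
    (hZZFp : lieD Z (lieD Z F) p ≠ 0) :
    lieD Z' (lieD Z' (lieD Z' F')) p / (lieD Z' (lieD Z' F') p) ^ 2 =
      lieD Z (lieD Z (lieD Z F)) p / (lieD Z (lieD Z F) p) ^ 2 := by
  have dd : ∀ (f : ℝ × ℝ → ℝ), ContDiff ℝ (⊤ : ℕ∞) f → ∀ q, DifferentiableAt ℝ f q :=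
    fun f hf q => hf.differentiable (by simp) q
  have hg : ContDiff ℝ (⊤ : ℕ∞) (fun q => (c q)⁻¹) := hc.inv hc0
  have hDc := lieD_contDiff hZ hc
  have hD2c := lieD_contDiff hZ hDc
  have hDF := lieD_contDiff hZ hF
  have hD2F := lieD_contDiff hZ hDF
  have hDg := lieD_contDiff hZ hg
  -- u = Z(c·F)
  have hu : ContDiff ℝ (⊤ : ℕ∞) (fun q => lieD Z c q * F q + c q * lieD Z F q) :=
    (hDc.mul hF).add (hc.mul hDF)
  have hDu := lieD_contDiff hZ hu
  -- step 1
  have e1 : lieD Z' F' = fun q => (c q)⁻¹ * (lieD Z c q * F q + c q * lieD Z F q) := by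
    funext q
    rw [hZ', hF']
    rw [lieD_smulV, lieD_mul (dd _ hc q) (dd _ hF q)]
  -- expansion of lieD Z u
  have eu : lieD Z (fun q => lieD Z c q * F q + c q * lieD Z F q)
      = fun q => (lieD Z (lieD Z c) q * F q + lieD Z c q * lieD Z F q)
          + (lieD Z c q * lieD Z F q + c q * lieD Z (lieD Z F) q) := by
    funext q
    rw [lieD_add (dd _ (hDc.mul hF) q) (dd _ (hc.mul hDF) q),
        lieD_mul (dd _ hDc q) (dd _ hF q), lieD_mul (dd _ hc q) (dd _ hDF q)]
  -- step 2
  have e2 : lieD Z' (lieD Z' F')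
      = fun q => (c q)⁻¹ * (lieD Z (fun q => (c q)⁻¹) q * (lieD Z c q * F q + c q * lieD Z F q)
          + (c q)⁻¹ * lieD Z (fun q => lieD Z c q * F q + c q * lieD Z F q) q) := by
    funext q
    rw [e1, hZ']
    rw [lieD_smulV, lieD_mul (dd _ hg q) (dd _ hu q)]
  -- relation between Zg and Zc
  have hrel : lieD Z c p * (c p)⁻¹ + c p * lieD Z (fun q => (c q)⁻¹) p = 0 := by
    have h1 : (fun q => c q * (c q)⁻¹) = fun _ : ℝ × ℝ => (1 : ℝ) :=
      funext fun q => mul_inv_cancel₀ (hc0 q)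
    have h2 := lieD_mul (Z := Z) (p := p) (dd _ hc p) (dd _ hg p)
    rw [h1] at h2
    have h0 : lieD Z (fun _ : ℝ × ℝ => (1 : ℝ)) p = 0 := by simp [lieD]
    rw [h0] at h2
    linarith
  -- value of lieD Z u at p
  have hup : lieD Z (fun q => lieD Z c q * F q + c q * lieD Z F q) p
      = c p * lieD Z (lieD Z F) p := by
    rw [eu]
    simp [hFp, hZFp]
  -- value of L2' at p
  have hL2 : lieD Z' (lieD Z' F') p = (c p)⁻¹ * lieD Z (lieD Z F) p := by
    rw [e2]
    simp only [hup, hFp, hZFp, mul_zero, zero_mul, add_zero, zero_add]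
    field_simp [hc0 p]
  -- smoothness of V (the function inside the outermost lieD Z')
  have hV : ContDiff ℝ (⊤ : ℕ∞) (fun q =>
      lieD Z (fun q => (c q)⁻¹) q * (lieD Z c q * F q + c q * lieD Z F q)
        + (c q)⁻¹ * lieD Z (fun q => lieD Z c q * F q + c q * lieD Z F q) q) :=
    (hDg.mul hu).add (hg.mul hDu)
  -- value of lieD Z (lieD Z u) at p
  have hD2u : lieD Z (lieD Z (fun q => lieD Z c q * F q + c q * lieD Z F q)) p
      = 3 * lieD Z c p * lieD Z (lieD Z F) p + c p * lieD Z (lieD Z (lieD Z F)) p := by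
    rw [eu]
    rw [lieD_add (dd _ ((hD2c.mul hF).add (hDc.mul hDF)) p)
        (dd _ ((hDc.mul hDF).add (hc.mul hD2F)) p),
      lieD_add (dd _ (hD2c.mul hF) p) (dd _ (hDc.mul hDF) p),
      lieD_add (dd _ (hDc.mul hDF) p) (dd _ (hc.mul hD2F) p),
      lieD_mul (dd _ hD2c p) (dd _ hF p), lieD_mul (dd _ hDc p) (dd _ hDF p),
      lieD_mul (dd _ hc p) (dd _ hD2F p)]
    rw [hFp, hZFp]
    ring
  -- value of lieD Z V at p
  have hDV : lieD Z (fun q =>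
      lieD Z (fun q => (c q)⁻¹) q * (lieD Z c q * F q + c q * lieD Z F q)
        + (c q)⁻¹ * lieD Z (fun q => lieD Z c q * F q + c q * lieD Z F q) q) p
      = 2 * lieD Z (fun q => (c q)⁻¹) p * (c p * lieD Z (lieD Z F) p)
        + (c p)⁻¹ * (3 * lieD Z c p * lieD Z (lieD Z F) p
            + c p * lieD Z (lieD Z (lieD Z F)) p) := by
    rw [lieD_add (dd _ (hDg.mul hu) p) (dd _ (hg.mul hDu) p),
      lieD_mul (dd _ hDg p) (dd _ hu p), lieD_mul (dd _ hg p) (dd _ hDu p)]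
    rw [hD2u, hup, hFp, hZFp]
    ring
  -- value of L3' at p
  have hL3 : lieD Z' (lieD Z' (lieD Z' F')) p
      = (c p)⁻¹ * (c p)⁻¹ * lieD Z (lieD Z (lieD Z F)) p := by
    rw [e2, hZ']
    rw [lieD_smulV, lieD_mul (dd _ hg p) (dd _ hV p)]
    rw [hDV, hup, hFp, hZFp]
    have hgp : lieD Z (fun q => (c q)⁻¹) p = -(lieD Z c p) * ((c p)⁻¹ * (c p)⁻¹) := by
      have hcp := hc0 p
      field_simp at hrel ⊢
      linarith
    rw [hgp]
    field_simp [hc0 p]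
    have h7 : c p ^ 7 * (c p)⁻¹ ^ 7 = 1 := by
      rw [← mul_pow, mul_inv_cancel₀ (hc0 p), one_pow]
    linear_combination (0 : ℝ) * h7
  rw [hL2, hL3]
  have hcp := hc0 p
  rw [div_eq_div_iff (by positivity) (by positivity)]
  · ring
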